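/- Let A be a right-closed V-action and B a left-closed V-action. For every object X of A, the evaluation-at-X functor E_X : St(A,B) → B, (F,φ) ↦ FX, has a right adjoint, the clone functor ⟨X,−⟩ : B → St(A,B), sending Y to the functor A ↦ ⟦A̲(A,X),Y⟧ equipped with the clone strength (whose component at (V,A) is the transpose of the composite of α⁻¹, the action of the map A̲(V ⊳ A,X) ⊗ V → A̲(A,X) (itself the transpose of ev ∘ α), and the evaluation A̲(A,X) ⊳ ⟦A̲(A,X),Y⟧ → Y). -/

import Mathlib

open CategoryTheory MonoidalCategory Limits

universe w v₁ v₂ v₃ u₁ u₂ u₃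

namespace MonEq

variable (V : Type u₁) [Category.{v₁} V] [MonoidalCategory V]
variable (C : Type u₂) [Category.{v₂} C]

/-- An action of a monoidal category `V` on a category `C`, with coherence
isomorphisms `lam : I ⊳ c ≅ c` and `assoc : (u ⊗ v) ⊳ c ≅ u ⊳ (v ⊳ c)`. -/
structure MonAction where
  act : V ⥤ C ⥤ C
  lam : act.obj (𝟙_ V) ≅ 𝟭 C
  assoc : ∀ u v : V, act.obj (u ⊗ v) ≅ act.obj v ⋙ act.obj u
  assoc_natural :
    ∀ {u u' v v' : V} (f : u ⟶ u') (g : v ⟶ v') (c : C),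
      (act.map (f ⊗ₘ g)).app c ≫ (assoc u' v').hom.app c =
        (assoc u v).hom.app c ≫ (act.map f).app ((act.obj v).obj c) ≫
          (act.obj u').map ((act.map g).app c)
  triangle_left :
    ∀ (v : V) (c : C),
      (assoc (𝟙_ V) v).hom.app c ≫ lam.hom.app ((act.obj v).obj c) =
        (act.map (λ_ v).hom).app c
  triangle_right :
    ∀ (v : V) (c : C),
      (assoc v (𝟙_ V)).hom.app c ≫ (act.obj v).map (lam.hom.app c) =
        (act.map (ρ_ v).hom).app c
  pentagon :
    ∀ (u v w : V) (c : C),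
      (act.map (α_ u v w).hom).app c ≫ (assoc u (v ⊗ w)).hom.app c ≫
          (act.obj u).map ((assoc v w).hom.app c) =
        (assoc (u ⊗ v) w).hom.app c ≫ (assoc u v).hom.app ((act.obj w).obj c)

variable {V C}

/-- A right-closed structure on a `V`-action: each functor `(-) ⊳ c : V ⥤ C`
has a right adjoint `rhom c = C̲(c,-) : C ⥤ V`. -/
structure RightClosed (A : MonAction V C) where
  rhom : C → C ⥤ V
  adj : ∀ c : C, A.act.flip.obj c ⊣ rhom c

/-- A left-closed structure on a `V`-action: each functor `v ⊳ (-) : C ⥤ C`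
has a right adjoint `lhom v = ⟦v,-⟧ : C ⥤ C`. -/
structure LeftClosed (A : MonAction V C) where
  lhom : V → C ⥤ C
  adj : ∀ v : V, A.act.obj v ⊣ lhom v

variable {A : MonAction V C}

/-- Evaluation (counit) `ev_{a,x} : C̲(a,x) ⊳ a ⟶ x` of the right-closed structure. -/
def RightClosed.ev (R : RightClosed A) (a x : C) :
    (A.act.obj ((R.rhom a).obj x)).obj a ⟶ x :=
  (R.adj a).counit.app x

/-- Evaluation (counit) `ev_{v,x} : v ⊳ ⟦v,x⟧ ⟶ x` of the left-closed structure. -/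
def LeftClosed.ev (L : LeftClosed A) (v : V) (x : C) :
    (A.act.obj v).obj ((L.lhom v).obj x) ⟶ x :=
  (L.adj v).counit.app x

/-- Contravariant functorial action `C̲(f,x) : C̲(b,x) ⟶ C̲(a,x)` of the right-homs. -/
def RightClosed.rmap (R : RightClosed A) {a b : C} (f : a ⟶ b) (x : C) :
    (R.rhom b).obj x ⟶ (R.rhom a).obj x :=
  ((R.adj a).homEquiv _ x) ((A.act.obj ((R.rhom b).obj x)).map f ≫ R.ev b x)

/-- Contravariant functorial action `⟦h,x⟧ : ⟦w,x⟧ ⟶ ⟦v,x⟧` of the left-homs. -/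
def LeftClosed.lmap (L : LeftClosed A) {v w : V} (h : v ⟶ w) (x : C) :
    (L.lhom w).obj x ⟶ (L.lhom v).obj x :=
  ((L.adj v).homEquiv _ x) ((A.act.map h).app ((L.lhom w).obj x) ≫ L.ev w x)

variable (A) in
/-- A strong endofunctor on a `V`-action. -/
structure StrongEndo where
  F : C ⥤ C
  str : ∀ v : V, F ⋙ A.act.obj v ⟶ A.act.obj v ⋙ F
  str_natural :
    ∀ {v w : V} (h : v ⟶ w) (c : C),
      (A.act.map h).app (F.obj c) ≫ (str w).app c =
        (str v).app c ≫ F.map ((A.act.map h).app c)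
  str_lam :
    ∀ c : C,
      (str (𝟙_ V)).app c ≫ F.map (A.lam.hom.app c) = A.lam.hom.app (F.obj c)
  str_assoc :
    ∀ (u v : V) (c : C),
      (str (u ⊗ v)).app c ≫ F.map ((A.assoc u v).hom.app c) =
        (A.assoc u v).hom.app (F.obj c) ≫ (A.act.obj u).map ((str v).app c) ≫
          (str u).app ((A.act.obj v).obj c)

/-- Strong natural transformations between strong endofunctors. -/
def IsStrongHom (F G : StrongEndo A) (τ : F.F ⟶ G.F) : Prop :=
  ∀ (v : V) (c : C),
    (A.act.obj v).map (τ.app c) ≫ (G.str v).app c =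
      (F.str v).app c ≫ τ.app ((A.act.obj v).obj c)

variable (A) in
/-- A strong monad on a `V`-action: a strong endofunctor with a compatible
monad structure. -/
structure StrongMonad extends StrongEndo A where
  unit : 𝟭 C ⟶ F
  mul : F ⋙ F ⟶ F
  left_unit : ∀ c : C, unit.app (F.obj c) ≫ mul.app c = 𝟙 (F.obj c)
  right_unit : ∀ c : C, F.map (unit.app c) ≫ mul.app c = 𝟙 (F.obj c)
  mul_assoc' : ∀ c : C, F.map (mul.app c) ≫ mul.app c = mul.app (F.obj c) ≫ mul.app c
  unit_str :
    ∀ (v : V) (c : C),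
      (A.act.obj v).map (unit.app c) ≫ (str v).app c = unit.app ((A.act.obj v).obj c)
  mul_str :
    ∀ (v : V) (c : C),
      (str v).app (F.obj c) ≫ F.map ((str v).app c) ≫ mul.app ((A.act.obj v).obj c) =
        (A.act.obj v).map (mul.app c) ≫ (str v).app c

/-- The interpretation map `ι(s)_a : C̲(a,X) ⊳ T a ⟶ X` determined by a strength `σ`
and a `T`-algebra `s : T X ⟶ X`. -/
def interpMap (R : RightClosed A) (T : C ⥤ C)
    (σ : ∀ v : V, T ⋙ A.act.obj v ⟶ A.act.obj v ⋙ T)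
    {X : C} (s : T.obj X ⟶ X) (a : C) :
    (A.act.obj ((R.rhom a).obj X)).obj (T.obj a) ⟶ X :=
  (σ ((R.rhom a).obj X)).app a ≫ T.map (R.ev a X) ≫ s

/-- The interpretation `⟦t⟧_{(X,s)} : C̲(a,X) ⊳ c ⟶ X` of a Kleisli map `t : c ⟶ T a`. -/
def interp (R : RightClosed A) (T : C ⥤ C)
    (σ : ∀ v : V, T ⋙ A.act.obj v ⟶ A.act.obj v ⋙ T)
    {X : C} (s : T.obj X ⟶ X) {c a : C} (t : c ⟶ T.obj a) :
    (A.act.obj ((R.rhom a).obj X)).obj c ⟶ X :=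
  (A.act.obj ((R.rhom a).obj X)).map t ≫ interpMap R T σ s a

/-- Satisfaction of an equation `u ≡ v : c ⟶ T a` by an algebra `(X,s)`. -/
def Satisfies (R : RightClosed A) (T : C ⥤ C)
    (σ : ∀ v : V, T ⋙ A.act.obj v ⟶ A.act.obj v ⋙ T)
    {X : C} (s : T.obj X ⟶ X) {c a : C} (u v : c ⟶ T.obj a) : Prop :=
  interp R T σ s u = interp R T σ s v

/-- A `T`-equation: a parallel pair of Kleisli maps. -/
structure TEq (T : C ⥤ C) where
  coar : C
  ar : C
  lhs : coar ⟶ T.obj ar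
  rhs : coar ⟶ T.obj ar

variable (A) in
/-- A Monadic Equational System: a biclosed `V`-action together with a strong
monad and a set of equations. -/
structure MES where
  R : RightClosed A
  L : LeftClosed A
  T : StrongMonad A
  E : Set (TEq T.F)

/-- Eilenberg–Moore algebra laws for a strong monad. -/
def IsEMAlgebra (M : StrongMonad A) {X : C} (s : M.F.obj X ⟶ X) : Prop :=
  M.unit.app X ≫ s = 𝟙 X ∧ M.mul.app X ≫ s = M.F.map s ≫ s

/-- An `S`-algebra: an Eilenberg–Moore algebra satisfying all the equations. -/
def IsSAlgebra (S : MES A) {X : C} (s : S.T.F.obj X ⟶ X) : Prop :=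
  IsEMAlgebra S.T s ∧ ∀ e ∈ S.E, Satisfies S.R S.T.F S.T.str s e.lhs e.rhs

/-- Free `S`-algebras: a left adjoint (described by its universal property)
to the forgetful functor from `S`-algebras. -/
structure FreeAlgebras (S : MES A) where
  TS : C → C
  τ : ∀ X : C, S.T.F.obj (TS X) ⟶ TS X
  unit : ∀ X : C, X ⟶ TS X
  isAlg : ∀ X : C, IsSAlgebra S (τ X)
  extend : ∀ (X : C) {Y : C} (t : S.T.F.obj Y ⟶ Y), IsSAlgebra S t →
    ∀ f : X ⟶ Y, ∃! g : TS X ⟶ Y, S.T.F.map g ≫ t = τ X ≫ g ∧ unit X ≫ g = f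

/-- The lifted algebra `s_v : T ⟦v,X⟧ ⟶ ⟦v,X⟧` on a left-hom. -/
def liftAlg (L : LeftClosed A) (T : C ⥤ C)
    (σ : ∀ v : V, T ⋙ A.act.obj v ⟶ A.act.obj v ⋙ T)
    {X : C} (s : T.obj X ⟶ X) (v : V) :
    T.obj ((L.lhom v).obj X) ⟶ (L.lhom v).obj X :=
  ((L.adj v).homEquiv _ X)
    ((σ v).app ((L.lhom v).obj X) ≫ T.map (L.ev v X) ≫ s)

/-- The object part `K_X(a) = ⟦C̲(a,X),X⟧` of the double-dualization construction. -/
def Kobj (R : RightClosed A) (L : LeftClosed A) (X a : C) : C :=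
  (L.lhom ((R.rhom a).obj X)).obj X

/-- The morphism part of the double-dualization construction. -/
def Kmap (R : RightClosed A) (L : LeftClosed A) (X : C) {a b : C} (f : a ⟶ b) :
    Kobj R L X a ⟶ Kobj R L X b :=
  L.lmap (R.rmap f X) X

/-- The unit `a ⟶ K_X a` of the double-dualization monad: the transpose of the
evaluation `ev_{a,X}`. -/
def ddUnit (R : RightClosed A) (L : LeftClosed A) (X a : C) : a ⟶ Kobj R L X a :=
  ((L.adj ((R.rhom a).obj X)).homEquiv a X) (R.ev a X)

/-- The map `δ_v : v ⟶ C̲(⟦v,X⟧,X)`: the transpose of the evaluation `ev_{v,X}`. -/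
def dd (R : RightClosed A) (L : LeftClosed A) (X : C) (v : V) :
    v ⟶ (R.rhom ((L.lhom v).obj X)).obj X :=
  ((R.adj ((L.lhom v).obj X)).homEquiv v X) (L.ev v X)

/-- The multiplication `K_X (K_X a) ⟶ K_X a` of the double-dualization monad,
namely `⟦δ_{C̲(a,X)},X⟧`. -/
def ddMult (R : RightClosed A) (L : LeftClosed A) (X a : C) :
    Kobj R L X (Kobj R L X a) ⟶ Kobj R L X a :=
  L.lmap (dd R L X ((R.rhom a).obj X)) X

/-- The map `C̲(v ⊳ a, X) ⊗ v ⟶ C̲(a,X)`, transpose of `ev ∘ assoc`. -/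
def hatg (R : RightClosed A) (X : C) (v : V) (a : C) :
    ((R.rhom ((A.act.obj v).obj a)).obj X) ⊗ v ⟶ (R.rhom a).obj X :=
  ((R.adj a).homEquiv _ X)
    ((A.assoc ((R.rhom ((A.act.obj v).obj a)).obj X) v).hom.app a ≫
      R.ev ((A.act.obj v).obj a) X)

/-- The clone strength `v ⊳ ⟦C̲(a,X),Y⟧ ⟶ ⟦C̲(v ⊳ a,X),Y⟧`. -/
def cloneStr (R : RightClosed A) (L : LeftClosed A) (X Y : C) (v : V) (a : C) :
    (A.act.obj v).obj ((L.lhom ((R.rhom a).obj X)).obj Y) ⟶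
      (L.lhom ((R.rhom ((A.act.obj v).obj a)).obj X)).obj Y :=
  ((L.adj ((R.rhom ((A.act.obj v).obj a)).obj X)).homEquiv _ Y)
    ((A.assoc ((R.rhom ((A.act.obj v).obj a)).obj X) v).inv.app
        ((L.lhom ((R.rhom a).obj X)).obj Y) ≫
      (A.act.map (hatg R X v a)).app ((L.lhom ((R.rhom a).obj X)).obj Y) ≫
      L.ev ((R.rhom a).obj X) Y)

/-- The counit `ε_X : K_X X ⟶ X` of the clone adjunction at `X`. -/
def cleval (R : RightClosed A) (L : LeftClosed A) (X : C) : Kobj R L X X ⟶ X :=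
  L.lmap (((R.adj X).homEquiv (𝟙_ V) X) (A.lam.hom.app X)) X ≫
    A.lam.inv.app ((L.lhom (𝟙_ V)).obj X) ≫ L.ev (𝟙_ V) X

/-- The transpose `m(s)_a : T a ⟶ K_X a` of the interpretation map `ι(s)_a`. -/
def mOf (R : RightClosed A) (L : LeftClosed A) (T : C ⥤ C)
    (σ : ∀ v : V, T ⋙ A.act.obj v ⟶ A.act.obj v ⋙ T)
    {X : C} (s : T.obj X ⟶ X) (a : C) :
    T.obj a ⟶ Kobj R L X a :=
  ((L.adj ((R.rhom a).obj X)).homEquiv (T.obj a) X) (interpMap R T σ s a)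

/-- The identity strength on the identity functor. -/
def idStr (A : MonAction V C) (v : V) : 𝟭 C ⋙ A.act.obj v ⟶ A.act.obj v ⋙ 𝟭 C :=
  { app := fun c => 𝟙 ((A.act.obj v).obj c) }

/-- The unit of the clone monad: the clone transpose of the identity on `X`
(computed through the identity strong functor). -/
def cloneUnit (R : RightClosed A) (L : LeftClosed A) (X a : C) : a ⟶ Kobj R L X a :=
  mOf R L (𝟭 C) (idStr A) (𝟙 X) a

/-- The multiplication of the clone monad: the clone transpose of
`ε_X ∘ K_X ε_X : K_X K_X X ⟶ X` computed through the composite `K_X ∘ K_X`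
with its composite (clone) strength. -/
def cloneMult (R : RightClosed A) (L : LeftClosed A) (X a : C) :
    Kobj R L X (Kobj R L X a) ⟶ Kobj R L X a :=
  ((L.adj ((R.rhom a).obj X)).homEquiv _ X)
    (cloneStr R L X X ((R.rhom a).obj X) (Kobj R L X a) ≫
      Kmap R L X (cloneStr R L X X ((R.rhom a).obj X) a) ≫
      Kmap R L X (Kmap R L X (R.ev a X)) ≫
      Kmap R L X (cleval R L X) ≫ cleval R L X)

end MonEq

namespace MonEq

variable {V : Type u₁} [Category.{v₁} V] [MonoidalCategory V]
variable {C : Type u₂} [Category.{v₂} C] {D : Type u₃} [Category.{v₃} D]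

/-- A strong functor between a `V`-action `A` on `C` and a `V`-action `B` on `D`. -/
structure StrongFunctorB (A : MonAction V C) (B : MonAction V D) where
  F : C ⥤ D
  str : ∀ v : V, F ⋙ B.act.obj v ⟶ A.act.obj v ⋙ F
  str_natural :
    ∀ {v w : V} (h : v ⟶ w) (c : C),
      (B.act.map h).app (F.obj c) ≫ (str w).app c =
        (str v).app c ≫ F.map ((A.act.map h).app c)
  str_lam :
    ∀ c : C,
      (str (𝟙_ V)).app c ≫ F.map (A.lam.hom.app c) = B.lam.hom.app (F.obj c)
  str_assoc :
    ∀ (u v : V) (c : C),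
      (str (u ⊗ v)).app c ≫ F.map ((A.assoc u v).hom.app c) =
        (B.assoc u v).hom.app (F.obj c) ≫ (B.act.obj u).map ((str v).app c) ≫
          (str u).app ((A.act.obj v).obj c)

variable {A : MonAction V C} {B : MonAction V D}

/-- Strong natural transformations between strong functors. -/
def IsStrongHomB (F G : StrongFunctorB A B) (τ : F.F ⟶ G.F) : Prop :=
  ∀ (v : V) (c : C),
    (B.act.obj v).map (τ.app c) ≫ (G.str v).app c =
      (F.str v).app c ≫ τ.app ((A.act.obj v).obj c)

/-- The category `St(A,B)` of strong functors and strong natural transformations. -/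
instance : Category (StrongFunctorB A B) where
  Hom F G := {τ : F.F ⟶ G.F // IsStrongHomB F G τ}
  id F := ⟨𝟙 F.F, by intro v c; simp⟩
  comp {F G H} f g := ⟨f.1 ≫ g.1, by
    intro v c
    simp only [NatTrans.comp_app, Functor.map_comp, Category.assoc, g.2 v c]
    rw [← Category.assoc, f.2 v c, Category.assoc]⟩
  id_comp f := Subtype.ext (by simp)
  comp_id f := Subtype.ext (by simp)
  assoc f g h := Subtype.ext (by simp)

/-- The evaluation-at-`X` functor `E_X : St(A,B) ⥤ D`. -/
def evalAt (A : MonAction V C) (B : MonAction V D) (X : C) :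
    StrongFunctorB A B ⥤ D where
  obj F := F.F.obj X
  map τ := τ.1.app X
  map_id := by intros; rfl
  map_comp := by intros; rfl

/-- The object part of the clone functor: `⟨X,Y⟩(a) = ⟦A̲(a,X),Y⟧`. -/
def cloneObjB (R : RightClosed A) (L : LeftClosed B) (X : C) (Y : D) (a : C) : D :=
  (L.lhom ((R.rhom a).obj X)).obj Y

/-- The clone strength `v ⊳ ⟦A̲(a,X),Y⟧ ⟶ ⟦A̲(v ⊳ a,X),Y⟧`: the transpose of
the composite of `assoc⁻¹`, the action of `hatg : A̲(v ⊳ a,X) ⊗ v ⟶ A̲(a,X)`,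
and the evaluation `A̲(a,X) ⊳ ⟦A̲(a,X),Y⟧ ⟶ Y`. -/
def cloneStrB (R : RightClosed A) (L : LeftClosed B) (X : C) (Y : D) (v : V) (a : C) :
    (B.act.obj v).obj (cloneObjB R L X Y a) ⟶ cloneObjB R L X Y ((A.act.obj v).obj a) :=
  ((L.adj ((R.rhom ((A.act.obj v).obj a)).obj X)).homEquiv _ Y)
    ((B.assoc ((R.rhom ((A.act.obj v).obj a)).obj X) v).inv.app (cloneObjB R L X Y a) ≫
      (B.act.map (hatg R X v a)).app (cloneObjB R L X Y a) ≫
      L.ev ((R.rhom a).obj X) Y)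


/-!
A strong morphism `F ⟶ ⟨X,Y⟩` is determined by its component at `X`. Transposing along the
left-hom adjunction, its component at `a` must be the composite
`A̲(a,X) ⊳ F a ⟶ F (A̲(a,X) ⊳ a) ⟶ F X ⟶ Y` of the strength, `F ev` and the given map
`F X ⟶ Y`; conversely the component at `X` is recovered by restricting along the identity
element `eId : I ⟶ A̲(X,X)` and evaluating, `⟦A̲(X,X),Y⟧ ⟶ ⟦I,Y⟧ ≅ I ⊳ ⟦I,Y⟧ ⟶ Y`.
Every identity needed (functoriality and strength axioms of `⟨X,Y⟩`, naturality and
strength of the transposes, the two triangle laws) is checked after transposing along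
`L.adj` and, for the maps `hatg`, along `R.adj`, where it becomes an instance of the
naturality, unit or pentagon axioms of the two actions.
-/

namespace MonAction

variable {E : Type*} [Category E] (M : MonAction V E)

lemma map_app_comp_map_app {u v w : V} (f : u ⟶ v) (g : v ⟶ w) (c : E) {Z : E}
    (h : (M.act.obj w).obj c ⟶ Z) :
    (M.act.map f).app c ≫ (M.act.map g).app c ≫ h = (M.act.map (f ≫ g)).app c ≫ h := by
  simp

lemma map_whiskerRight_app_comp_assoc_hom_app {u u' : V} (f : u ⟶ u') (v : V) (c : E) :
    (M.act.map (f ▷ v)).app c ≫ (M.assoc u' v).hom.app c =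
      (M.assoc u v).hom.app c ≫ (M.act.map f).app ((M.act.obj v).obj c) := by
  simpa using M.assoc_natural f (𝟙 v) c

lemma map_whiskerLeft_app_comp_assoc_hom_app (u : V) {v v' : V} (g : v ⟶ v') (c : E) :
    (M.act.map (u ◁ g)).app c ≫ (M.assoc u v').hom.app c =
      (M.assoc u v).hom.app c ≫ (M.act.obj u).map ((M.act.map g).app c) := by
  simpa using M.assoc_natural (𝟙 u) g c

lemma assoc_inv_app_comp_map_whiskerRight {u u' : V} (f : u ⟶ u') (v : V) (c : E) :
    (M.assoc u v).inv.app c ≫ (M.act.map (f ▷ v)).app c =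
      (M.act.map f).app ((M.act.obj v).obj c) ≫ (M.assoc u' v).inv.app c := by
  rw [← cancel_epi ((M.assoc u v).hom.app c), Iso.hom_inv_id_app_assoc,
    ← reassoc_of% M.map_whiskerRight_app_comp_assoc_hom_app, Iso.hom_inv_id_app,
    Category.comp_id]

lemma assoc_inv_app_comp_map_whiskerLeft (u : V) {v v' : V} (g : v ⟶ v') (c : E) :
    (M.assoc u v).inv.app c ≫ (M.act.map (u ◁ g)).app c =
      (M.act.obj u).map ((M.act.map g).app c) ≫ (M.assoc u v').inv.app c := by
  rw [← cancel_epi ((M.assoc u v).hom.app c), Iso.hom_inv_id_app_assoc,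
    ← reassoc_of% M.map_whiskerLeft_app_comp_assoc_hom_app, Iso.hom_inv_id_app,
    Category.comp_id]

lemma map_assoc_hom_app_comp_assoc_inv_app (q u v : V) (c : E) :
    (M.act.obj q).map ((M.assoc u v).hom.app c) ≫
        (M.assoc q u).inv.app ((M.act.obj v).obj c) ≫ (M.assoc (q ⊗ u) v).inv.app c =
      (M.assoc q (u ⊗ v)).inv.app c ≫ (M.act.map (α_ q u v).inv).app c := by
  rw [← cancel_epi ((M.act.map (α_ q u v).hom).app c ≫ (M.assoc q (u ⊗ v)).hom.app c)]
  simp only [Category.assoc]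
  rw [reassoc_of% M.pentagon]
  simp

end MonAction

namespace LeftClosed

variable (L : LeftClosed B)

lemma map_homEquiv_comp_ev (v : V) {c Y : D} (t : (B.act.obj v).obj c ⟶ Y) :
    (B.act.obj v).map ((L.adj v).homEquiv c Y t) ≫ L.ev v Y = t := by
  rw [ev, ← Adjunction.homEquiv_counit, Equiv.symm_apply_apply]

lemma hom_ext {v : V} {c Y : D} {g h : c ⟶ (L.lhom v).obj Y}
    (H : (B.act.obj v).map g ≫ L.ev v Y = (B.act.obj v).map h ≫ L.ev v Y) : g = h :=
  ((L.adj v).homEquiv c Y).symm.injective (by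
    rw [Adjunction.homEquiv_counit, Adjunction.homEquiv_counit]
    exact H)

lemma ev_naturality (v : V) {Y Y' : D} (g : Y ⟶ Y') :
    (B.act.obj v).map ((L.lhom v).map g) ≫ L.ev v Y' = L.ev v Y ≫ g :=
  (L.adj v).counit.naturality g

lemma map_lmap_comp_ev {v w : V} (h : v ⟶ w) (Y : D) :
    (B.act.obj v).map (L.lmap h Y) ≫ L.ev v Y = (B.act.map h).app _ ≫ L.ev w Y :=
  L.map_homEquiv_comp_ev v _

lemma map_comp_lmap_comp_ev {v w : V} (h : v ⟶ w) {c : D} (Y : D)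
    (g : c ⟶ (L.lhom w).obj Y) :
    (B.act.obj v).map (g ≫ L.lmap h Y) ≫ L.ev v Y =
      (B.act.map h).app c ≫ (B.act.obj w).map g ≫ L.ev w Y := by
  rw [Functor.map_comp, Category.assoc, map_lmap_comp_ev, NatTrans.naturality_assoc]

lemma comp_lam_inv_app_comp_ev {c Y : D} (g : c ⟶ (L.lhom (𝟙_ V)).obj Y) :
    g ≫ B.lam.inv.app _ ≫ L.ev (𝟙_ V) Y =
      B.lam.inv.app c ≫ (B.act.obj (𝟙_ V)).map g ≫ L.ev (𝟙_ V) Y :=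
  B.lam.inv.naturality_assoc g (L.ev (𝟙_ V) Y)

lemma lmap_id (v : V) (Y : D) : L.lmap (𝟙 v) Y = 𝟙 _ :=
  L.hom_ext (by simp [map_lmap_comp_ev])

lemma lmap_comp {u v w : V} (h : u ⟶ v) (k : v ⟶ w) (Y : D) :
    L.lmap (h ≫ k) Y = L.lmap k Y ≫ L.lmap h Y :=
  L.hom_ext (by simp [map_lmap_comp_ev])

lemma lmap_naturality {v w : V} (h : v ⟶ w) {Y Y' : D} (g : Y ⟶ Y') :
    (L.lhom w).map g ≫ L.lmap h Y' = L.lmap h Y ≫ (L.lhom v).map g :=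
  L.hom_ext (by
    rw [map_comp_lmap_comp_ev, ev_naturality, Functor.map_comp, Category.assoc, ev_naturality,
      reassoc_of% L.map_lmap_comp_ev])

end LeftClosed

namespace RightClosed

variable (R : RightClosed A) (X : C)

lemma map_homEquiv_app_comp_ev (a : C) {v : V} (t : (A.act.obj v).obj a ⟶ X) :
    (A.act.map ((R.adj a).homEquiv v X t)).app a ≫ R.ev a X = t := by
  rw [ev, ← Functor.flip_obj_map, ← Adjunction.homEquiv_counit, Equiv.symm_apply_apply]

lemma hom_ext {a : C} {v : V} {g h : v ⟶ (R.rhom a).obj X}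
    (H : (A.act.map g).app a ≫ R.ev a X = (A.act.map h).app a ≫ R.ev a X) : g = h :=
  ((R.adj a).homEquiv v X).symm.injective (by
    rw [Adjunction.homEquiv_counit, Adjunction.homEquiv_counit]
    exact H)

lemma map_rmap_app_comp_ev {a b : C} (f : a ⟶ b) :
    (A.act.map (R.rmap f X)).app a ≫ R.ev a X =
      (A.act.obj ((R.rhom b).obj X)).map f ≫ R.ev b X :=
  R.map_homEquiv_app_comp_ev X a _

lemma map_comp_rmap_app_comp_ev {a b : C} (f : a ⟶ b) {v : V} (h : v ⟶ (R.rhom b).obj X) :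
    (A.act.map (h ≫ R.rmap f X)).app a ≫ R.ev a X =
      (A.act.obj v).map f ≫ (A.act.map h).app b ≫ R.ev b X := by
  rw [Functor.map_comp, NatTrans.comp_app, Category.assoc, map_rmap_app_comp_ev,
    ← NatTrans.naturality_assoc]

lemma rmap_id (a : C) : R.rmap (𝟙 a) X = 𝟙 _ :=
  R.hom_ext X (by simp [map_rmap_app_comp_ev])

lemma rmap_comp {a b c : C} (f : a ⟶ b) (g : b ⟶ c) :
    R.rmap (f ≫ g) X = R.rmap g X ≫ R.rmap f X :=
  R.hom_ext X (by
    rw [map_rmap_app_comp_ev, map_comp_rmap_app_comp_ev, map_rmap_app_comp_ev, Functor.map_comp,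
      Category.assoc])

def eId : 𝟙_ V ⟶ (R.rhom X).obj X :=
  (R.adj X).homEquiv (𝟙_ V) X (A.lam.hom.app X)

lemma map_eId_app_comp_ev : (A.act.map (R.eId X)).app X ≫ R.ev X X = A.lam.hom.app X :=
  R.map_homEquiv_app_comp_ev X X _

end RightClosed

section Hatg

variable (R : RightClosed A) (X : C)

lemma map_hatg_app_comp_ev (v : V) (a : C) :
    (A.act.map (hatg R X v a)).app a ≫ R.ev a X =
      (A.assoc ((R.rhom ((A.act.obj v).obj a)).obj X) v).hom.app a ≫
        R.ev ((A.act.obj v).obj a) X :=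
  R.map_homEquiv_app_comp_ev X a _

lemma hatg_comp_rmap {a b : C} (f : a ⟶ b) (v : V) :
    hatg R X v b ≫ R.rmap f X = (R.rmap ((A.act.obj v).map f) X ▷ v) ≫ hatg R X v a :=
  R.hom_ext X (by
    rw [RightClosed.map_comp_rmap_app_comp_ev, map_hatg_app_comp_ev, Functor.map_comp,
      NatTrans.comp_app, Category.assoc, map_hatg_app_comp_ev,
      reassoc_of% A.map_whiskerRight_app_comp_assoc_hom_app,
      RightClosed.map_rmap_app_comp_ev, NatTrans.naturality_assoc]
    rfl)

lemma whiskerLeft_comp_hatg {v w : V} (h : v ⟶ w) (a : C) :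
    ((R.rhom ((A.act.obj w).obj a)).obj X ◁ h) ≫ hatg R X w a =
      (R.rmap ((A.act.map h).app a) X ▷ v) ≫ hatg R X v a :=
  R.hom_ext X (by
    simp only [Functor.map_comp, NatTrans.comp_app, Category.assoc, map_hatg_app_comp_ev,
      reassoc_of% A.map_whiskerLeft_app_comp_assoc_hom_app,
      reassoc_of% A.map_whiskerRight_app_comp_assoc_hom_app,
      RightClosed.map_rmap_app_comp_ev])

lemma rmap_lam_whiskerRight_comp_hatg (a : C) :
    (R.rmap (A.lam.hom.app a) X ▷ 𝟙_ V) ≫ hatg R X (𝟙_ V) a = (ρ_ ((R.rhom a).obj X)).hom :=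
  R.hom_ext X (by
    rw [Functor.map_comp, NatTrans.comp_app, Category.assoc, map_hatg_app_comp_ev,
      reassoc_of% A.map_whiskerRight_app_comp_assoc_hom_app,
      RightClosed.map_rmap_app_comp_ev, reassoc_of% A.triangle_right]
    rfl)

lemma rmap_assoc_whiskerRight_comp_hatg (u v : V) (a : C) :
    (R.rmap ((A.assoc u v).hom.app a) X ▷ (u ⊗ v)) ≫ hatg R X (u ⊗ v) a =
      (α_ ((R.rhom ((A.act.obj u).obj ((A.act.obj v).obj a))).obj X) u v).inv ≫
        (hatg R X u ((A.act.obj v).obj a) ▷ v) ≫ hatg R X v a := by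
  rw [Iso.eq_inv_comp]
  refine R.hom_ext X ?_
  simp only [Functor.map_comp, NatTrans.comp_app, Category.assoc, map_hatg_app_comp_ev,
    reassoc_of% A.map_whiskerRight_app_comp_assoc_hom_app,
    RightClosed.map_rmap_app_comp_ev, Functor.comp_obj]
  rw [reassoc_of% A.pentagon]

lemma eId_comp_rmap_ev_whiskerRight_comp_hatg (a : C) :
    ((R.eId X ≫ R.rmap (R.ev a X) X) ▷ (R.rhom a).obj X) ≫ hatg R X ((R.rhom a).obj X) a =
      (λ_ ((R.rhom a).obj X)).hom :=
  R.hom_ext X (by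
    rw [Functor.map_comp, NatTrans.comp_app, Category.assoc, map_hatg_app_comp_ev,
      reassoc_of% A.map_whiskerRight_app_comp_assoc_hom_app,
      RightClosed.map_comp_rmap_app_comp_ev, RightClosed.map_eId_app_comp_ev,
      A.lam.hom.naturality, reassoc_of% A.triangle_left]
    rfl)

end Hatg

@[ext]
lemma StrongFunctorB.hom_ext {F G : StrongFunctorB A B} {τ τ' : F ⟶ G}
    (h : ∀ c, τ.1.app c = τ'.1.app c) : τ = τ' :=
  Subtype.ext (NatTrans.ext (funext h))

lemma StrongFunctorB.str_naturality (F : StrongFunctorB A B) (v : V) {a b : C} (f : a ⟶ b) :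
    (B.act.obj v).map (F.F.map f) ≫ (F.str v).app b =
      (F.str v).app a ≫ F.F.map ((A.act.obj v).map f) :=
  (F.str v).naturality f

section Clone

variable (R : RightClosed A) (L : LeftClosed B) (X : C)

/-- `cloneStrB` with `cloneObjB` unfolded in its type: rewriting with the lemmas about `L.ev`
and `L.lmap` needs the unfolded form. -/
def cloneStrength (Y : D) (v : V) (a : C) :
    (B.act.obj v).obj ((L.lhom ((R.rhom a).obj X)).obj Y) ⟶
      (L.lhom ((R.rhom ((A.act.obj v).obj a)).obj X)).obj Y :=
  cloneStrB R L X Y v a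

lemma map_cloneStrength_comp_ev (Y : D) (v : V) (a : C) :
    (B.act.obj ((R.rhom ((A.act.obj v).obj a)).obj X)).map (cloneStrength R L X Y v a) ≫
        L.ev ((R.rhom ((A.act.obj v).obj a)).obj X) Y =
      (B.assoc ((R.rhom ((A.act.obj v).obj a)).obj X) v).inv.app _ ≫
        (B.act.map (hatg R X v a)).app _ ≫ L.ev ((R.rhom a).obj X) Y :=
  L.map_homEquiv_comp_ev _ _

lemma map_map_comp_cloneStrength_comp_ev (Y : D) (v : V) (a : C) {c : D}
    (g : c ⟶ (L.lhom ((R.rhom a).obj X)).obj Y) :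
    (B.act.obj ((R.rhom ((A.act.obj v).obj a)).obj X)).map
          ((B.act.obj v).map g ≫ cloneStrength R L X Y v a) ≫
        L.ev ((R.rhom ((A.act.obj v).obj a)).obj X) Y =
      (B.assoc ((R.rhom ((A.act.obj v).obj a)).obj X) v).inv.app c ≫
        (B.act.map (hatg R X v a)).app c ≫ (B.act.obj ((R.rhom a).obj X)).map g ≫
          L.ev ((R.rhom a).obj X) Y := by
  rw [Functor.map_comp, Category.assoc, map_cloneStrength_comp_ev]
  erw [(B.assoc _ v).inv.naturality_assoc g, NatTrans.naturality_assoc]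

lemma map_lmap_rmap_comp_cloneStrength (Y : D) (v : V) {a b : C} (f : a ⟶ b) :
    (B.act.obj v).map (L.lmap (R.rmap f X) Y) ≫ cloneStrength R L X Y v b =
      cloneStrength R L X Y v a ≫ L.lmap (R.rmap ((A.act.obj v).map f) X) Y :=
  L.hom_ext (by
    rw [map_map_comp_cloneStrength_comp_ev, L.map_lmap_comp_ev, L.map_comp_lmap_comp_ev,
      map_cloneStrength_comp_ev, B.map_app_comp_map_app, hatg_comp_rmap,
      ← B.map_app_comp_map_app, reassoc_of% B.assoc_inv_app_comp_map_whiskerRight])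

lemma act_map_app_comp_cloneStrength (Y : D) {v w : V} (h : v ⟶ w) (a : C) :
    (B.act.map h).app _ ≫ cloneStrength R L X Y w a =
      cloneStrength R L X Y v a ≫ L.lmap (R.rmap ((A.act.map h).app a) X) Y :=
  L.hom_ext (by
    rw [Functor.map_comp, Category.assoc, map_cloneStrength_comp_ev, L.map_comp_lmap_comp_ev,
      map_cloneStrength_comp_ev, ← reassoc_of% B.assoc_inv_app_comp_map_whiskerLeft,
      B.map_app_comp_map_app, whiskerLeft_comp_hatg, ← B.map_app_comp_map_app,
      reassoc_of% B.assoc_inv_app_comp_map_whiskerRight])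

lemma cloneStrength_comp_lmap_rmap_lam (Y : D) (a : C) :
    cloneStrength R L X Y (𝟙_ V) a ≫ L.lmap (R.rmap (A.lam.hom.app a) X) Y =
      B.lam.hom.app ((L.lhom ((R.rhom a).obj X)).obj Y) :=
  L.hom_ext (by
    rw [L.map_comp_lmap_comp_ev, map_cloneStrength_comp_ev,
      ← reassoc_of% B.assoc_inv_app_comp_map_whiskerRight, B.map_app_comp_map_app,
      rmap_lam_whiskerRight_comp_hatg, ← B.triangle_right]
    simp)

lemma cloneStrength_comp_lmap_rmap_assoc (Y : D) (u v : V) (a : C) :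
    cloneStrength R L X Y (u ⊗ v) a ≫ L.lmap (R.rmap ((A.assoc u v).hom.app a) X) Y =
      (B.assoc u v).hom.app _ ≫ (B.act.obj u).map (cloneStrength R L X Y v a) ≫
        cloneStrength R L X Y u ((A.act.obj v).obj a) :=
  L.hom_ext (by
    rw [L.map_comp_lmap_comp_ev, map_cloneStrength_comp_ev,
      ← reassoc_of% B.assoc_inv_app_comp_map_whiskerRight, B.map_app_comp_map_app,
      rmap_assoc_whiskerRight_comp_hatg, Functor.map_comp (B.act.obj _), Category.assoc]
    simp only [Functor.comp_obj]
    rw [map_map_comp_cloneStrength_comp_ev, map_cloneStrength_comp_ev,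
      ← reassoc_of% B.assoc_inv_app_comp_map_whiskerRight,
      reassoc_of% B.map_assoc_hom_app_comp_assoc_inv_app]
    simp)

lemma map_lhom_map_comp_cloneStrength {Y Y' : D} (g : Y ⟶ Y') (v : V) (a : C) :
    (B.act.obj v).map ((L.lhom ((R.rhom a).obj X)).map g) ≫ cloneStrength R L X Y' v a =
      cloneStrength R L X Y v a ≫ (L.lhom ((R.rhom ((A.act.obj v).obj a)).obj X)).map g :=
  L.hom_ext (by
    rw [map_map_comp_cloneStrength_comp_ev, L.ev_naturality, Functor.map_comp, Category.assoc,
      L.ev_naturality, reassoc_of% map_cloneStrength_comp_ev])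

def cloneStrongFunctor (Y : D) : StrongFunctorB A B where
  F :=
    { obj a := (L.lhom ((R.rhom a).obj X)).obj Y
      map f := L.lmap (R.rmap f X) Y
      map_id a := by rw [R.rmap_id, L.lmap_id]
      map_comp f g := by rw [R.rmap_comp, L.lmap_comp] }
  str v :=
    { app := cloneStrength R L X Y v
      naturality _ _ f := map_lmap_rmap_comp_cloneStrength R L X Y v f }
  str_natural := act_map_app_comp_cloneStrength R L X Y
  str_lam := cloneStrength_comp_lmap_rmap_lam R L X Y
  str_assoc := cloneStrength_comp_lmap_rmap_assoc R L X Y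

def clone : D ⥤ StrongFunctorB A B where
  obj := cloneStrongFunctor R L X
  map g :=
    ⟨{ app a := (L.lhom ((R.rhom a).obj X)).map g
       naturality _ _ f := (L.lmap_naturality (R.rmap f X) g).symm },
      map_lhom_map_comp_cloneStrength R L X g⟩
  map_id Y := by ext a; exact (L.lhom _).map_id Y
  map_comp f g := by ext a; exact (L.lhom _).map_comp f g

def cloneCounit (Y : D) : (L.lhom ((R.rhom X).obj X)).obj Y ⟶ Y :=
  L.lmap (R.eId X) Y ≫ B.lam.inv.app _ ≫ L.ev (𝟙_ V) Y

lemma cloneStrength_comp_lmap_rmap_ev_comp_cloneCounit (Y : D) (a : C) :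
    cloneStrength R L X Y ((R.rhom a).obj X) a ≫ L.lmap (R.rmap (R.ev a X) X) Y ≫
        cloneCounit R L X Y =
      L.ev ((R.rhom a).obj X) Y := by
  rw [cloneCounit, ← reassoc_of% L.lmap_comp, ← Category.assoc, L.comp_lam_inv_app_comp_ev,
    L.map_comp_lmap_comp_ev, map_cloneStrength_comp_ev,
    ← reassoc_of% B.assoc_inv_app_comp_map_whiskerRight, B.map_app_comp_map_app,
    eId_comp_rmap_ev_whiskerRight_comp_hatg, ← B.triangle_left]
  simp

variable {X} in
def cloneTranspose {F : StrongFunctorB A B} {Y : D} (f : F.F.obj X ⟶ Y) (a : C) :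
    F.F.obj a ⟶ (L.lhom ((R.rhom a).obj X)).obj Y :=
  (L.adj ((R.rhom a).obj X)).homEquiv _ Y
    ((F.str ((R.rhom a).obj X)).app a ≫ F.F.map (R.ev a X) ≫ f)

variable {F : StrongFunctorB A B} {Y : D}

lemma map_cloneTranspose_comp_ev (f : F.F.obj X ⟶ Y) (a : C) :
    (B.act.obj ((R.rhom a).obj X)).map (cloneTranspose R L f a) ≫
        L.ev ((R.rhom a).obj X) Y =
      (F.str ((R.rhom a).obj X)).app a ≫ F.F.map (R.ev a X) ≫ f :=
  L.map_homEquiv_comp_ev _ _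

lemma cloneTranspose_naturality (f : F.F.obj X ⟶ Y) {a b : C} (h : a ⟶ b) :
    F.F.map h ≫ cloneTranspose R L f b = cloneTranspose R L f a ≫ L.lmap (R.rmap h X) Y :=
  L.hom_ext (by
    rw [Functor.map_comp, Category.assoc, map_cloneTranspose_comp_ev, L.map_comp_lmap_comp_ev,
      map_cloneTranspose_comp_ev, reassoc_of% F.str_naturality, reassoc_of% F.str_natural,
      ← F.F.map_comp_assoc, ← F.F.map_comp_assoc, R.map_rmap_app_comp_ev])

lemma map_cloneTranspose_comp_cloneStrength (f : F.F.obj X ⟶ Y) (v : V) (a : C) :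
    (B.act.obj v).map (cloneTranspose R L f a) ≫ cloneStrength R L X Y v a =
      (F.str v).app a ≫ cloneTranspose R L f ((A.act.obj v).obj a) :=
  L.hom_ext (by
    rw [map_map_comp_cloneStrength_comp_ev, map_cloneTranspose_comp_ev, reassoc_of% F.str_natural,
      ← F.F.map_comp_assoc, map_hatg_app_comp_ev, F.F.map_comp_assoc, reassoc_of% F.str_assoc,
      Functor.map_comp, Category.assoc, map_cloneTranspose_comp_ev]
    simp)

def cloneTransposeHom (f : F.F.obj X ⟶ Y) : F ⟶ (clone R L X).obj Y :=
  ⟨{ app := cloneTranspose R L f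
     naturality _ _ h := cloneTranspose_naturality R L X f h },
    map_cloneTranspose_comp_cloneStrength R L X f⟩

lemma cloneTranspose_comp_cloneCounit (f : F.F.obj X ⟶ Y) :
    cloneTranspose R L f X ≫ cloneCounit R L X Y = f := by
  rw [cloneCounit, ← Category.assoc, L.comp_lam_inv_app_comp_ev, L.map_comp_lmap_comp_ev,
    map_cloneTranspose_comp_ev, reassoc_of% F.str_natural, ← F.F.map_comp_assoc,
    R.map_eId_app_comp_ev, reassoc_of% F.str_lam]
  simp

lemma cloneTranspose_app_comp_cloneCounit (τ : F ⟶ (clone R L X).obj Y) (a : C) :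
    cloneTranspose R L (τ.1.app X ≫ cloneCounit R L X Y) a = τ.1.app a :=
  L.hom_ext (by
    rw [map_cloneTranspose_comp_ev]
    erw [τ.1.naturality_assoc, ← reassoc_of% (τ.2 _ a)]
    exact congrArg _ (cloneStrength_comp_lmap_rmap_ev_comp_cloneCounit R L X Y a))

lemma cloneTranspose_comp {Y' : D} (f : F.F.obj X ⟶ Y) (g : Y ⟶ Y') (a : C) :
    cloneTranspose R L (f ≫ g) a = cloneTranspose R L f a ≫ (L.lhom _).map g :=
  L.hom_ext (by
    rw [map_cloneTranspose_comp_ev, Functor.map_comp, Category.assoc, L.ev_naturality,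
      reassoc_of% map_cloneTranspose_comp_ev])

def cloneAdjunction : evalAt A B X ⊣ clone R L X :=
  Adjunction.mkOfHomEquiv
    { homEquiv _ Y :=
        { toFun := cloneTransposeHom R L X
          invFun τ := τ.1.app X ≫ cloneCounit R L X Y
          left_inv := cloneTranspose_comp_cloneCounit R L X
          right_inv τ := StrongFunctorB.hom_ext (cloneTranspose_app_comp_cloneCounit R L X τ) }
      homEquiv_naturality_left_symm _ _ := Category.assoc _ _ _
      homEquiv_naturality_right f g := StrongFunctorB.hom_ext (cloneTranspose_comp R L X f g) }

end Clone

/-- **The clone adjunction** (Theorem 3.? of the paper).  Let `A` be a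
right-closed `V`-action and `B` a left-closed `V`-action.  For every `X ∈ A`,
the evaluation-at-`X` functor `E_X : St(A,B) ⥤ B` has a right adjoint, the
clone functor `⟨X,−⟩`, sending `Y` to the strong functor
`a ↦ ⟦A̲(a,X),Y⟧` equipped with the clone strength. -/
theorem clone_adjunction (A : MonAction V C) (B : MonAction V D)
    (R : RightClosed A) (L : LeftClosed B) (X : C) :
    ∃ (G : D ⥤ StrongFunctorB A B)
      (h : ∀ (Y : D) (a : C), (G.obj Y).F.obj a = cloneObjB R L X Y a),
      (∀ (v : V) (Y : D) (a : C),
        ((G.obj Y).str v).app a =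
          eqToHom (congrArg (B.act.obj v).obj (h Y a)) ≫ cloneStrB R L X Y v a ≫
            eqToHom (h Y ((A.act.obj v).obj a)).symm) ∧
      Nonempty (evalAt A B X ⊣ G) :=
  ⟨clone R L X, fun _ _ => rfl,
    fun _ _ _ => ((Category.id_comp _).trans (Category.comp_id _)).symm,
    ⟨cloneAdjunction R L X⟩⟩

end MonEq
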